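/- Let a > 0, λ₀, λ₁ > 0, α ∈ (0,1), and let U be uniform on (0,1). Define the proxy p-value P(n) = 1 − Φ(a·√n + Φ^{-1}(U)·λ₁/λ₀). Then for every n > 0, P(P(n) ≤ α) = 1 − Φ((Φ^{-1}(1−α) − a·√n)·λ₀/λ₁), and consequently lim_{n→∞} P(P(n) ≤ α) = 1. -/

import Mathlib

/-!
`Φ⁻¹(U)` is standard normal when `U` is uniform on `(0,1)`, because `Φ` is a continuous strictly
increasing bijection `ℝ → (0,1)`, so `P(Φ⁻¹(U) ≥ c) = 1 - Φ(c)`. The event `P(n) ≤ α` unwinds,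
by monotonicity of `Φ` and a linear rearrangement, to `Φ⁻¹(U) ≥ c(n)` with
`c(n) = (Φ⁻¹(1-α) - a√n)·λ₀/λ₁`, and `c(n) → -∞` drives the power to `1`.
-/

open Filter MeasureTheory Set

/-- Standard normal CDF. -/
noncomputable def Phi (x : ℝ) : ℝ :=
  ∫ t in Set.Iio x, (Real.sqrt (2 * Real.pi))⁻¹ * Real.exp (-t ^ 2 / 2)

/-- Standard normal density. -/
noncomputable def stdPdf (x : ℝ) : ℝ := (Real.sqrt (2 * Real.pi))⁻¹ * Real.exp (-x ^ 2 / 2)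

/-- Standard normal quantile function. -/
noncomputable def PhiInv : ℝ → ℝ := Function.invFun Phi

/-- Logit function. -/
noncomputable def logit (x : ℝ) : ℝ := Real.log x - Real.log (1 - x)

open Topology

section IntegralIio

variable {f : ℝ → ℝ}

theorem strictMono_integral_Iio (hf : Integrable f) (hpos : ∀ x, 0 < f x) :
    StrictMono fun x => ∫ t in Iio x, f t := by
  intro x y hxy
  have hdiff : (∫ t in Iio y, f t) - ∫ t in Iio x, f t = ∫ t in x..y, f t :=
    intervalIntegral.integral_Iio_sub_Iio' hf.integrableOn hf.integrableOn
  have hincrement : 0 < ∫ t in x..y, f t :=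
    intervalIntegral.intervalIntegral_pos_of_pos hf.intervalIntegrable hpos hxy
  exact sub_pos.1 (hdiff ▸ hincrement)

theorem continuous_integral_Iio (hf : Integrable f) : Continuous fun x => ∫ t in Iio x, f t := by
  have hprimitive :
      (fun x => ∫ t in Iio x, f t) = fun x => (∫ t in Iio 0, f t) + ∫ t in 0..x, f t := by
    funext x
    rw [← intervalIntegral.integral_Iio_sub_Iio' hf.integrableOn hf.integrableOn]
    ring
  rw [hprimitive]
  exact continuous_const.add (hf.continuous_primitive 0)

end IntegralIio

theorem stdPdf_eq_gaussian :
    stdPdf = fun x => (Real.sqrt (2 * Real.pi))⁻¹ * Real.exp (-(1 / 2) * x ^ 2) := by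
  funext x
  rw [stdPdf, neg_div, div_eq_inv_mul, one_div, neg_mul]

theorem stdPdf_pos (x : ℝ) : 0 < stdPdf x := by
  rw [stdPdf]
  positivity

theorem integrable_stdPdf : Integrable stdPdf := by
  rw [stdPdf_eq_gaussian]
  exact (integrable_exp_neg_mul_sq (by norm_num)).const_mul _

theorem integral_stdPdf : ∫ x, stdPdf x = 1 := by
  rw [stdPdf_eq_gaussian, integral_const_mul, integral_gaussian,
    show Real.pi / (1 / 2) = 2 * Real.pi by ring]
  exact inv_mul_cancel₀ (by positivity)

theorem Phi_eq_integral_stdPdf : Phi = fun x => ∫ t in Iio x, stdPdf t := rfl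

theorem Phi_strictMono : StrictMono Phi :=
  strictMono_integral_Iio integrable_stdPdf stdPdf_pos

theorem Phi_continuous : Continuous Phi := continuous_integral_Iio integrable_stdPdf

theorem Phi_tendsto_atBot : Tendsto Phi atBot (𝓝 0) := tendsto_integral_Iio_zero tendsto_id

theorem Phi_tendsto_atTop : Tendsto Phi atTop (𝓝 1) := by
  rw [Phi_eq_integral_stdPdf, ← integral_stdPdf]
  exact (aecover_Iio tendsto_id).integral_tendsto_of_countably_generated integrable_stdPdf

theorem Phi_pos (x : ℝ) : 0 < Phi x :=
  (Phi_strictMono.monotone.le_of_tendsto Phi_tendsto_atBot (x - 1)).trans_lt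
    (Phi_strictMono (sub_one_lt x))

theorem Phi_PhiInv {u : ℝ} (hu : u ∈ Ioo 0 1) : Phi (PhiInv u) = u := by
  obtain ⟨x₀, hx₀⟩ := (Phi_tendsto_atBot.eventually_lt_const hu.1).exists
  obtain ⟨x₁, hx₁⟩ := (Phi_tendsto_atTop.eventually_const_lt hu.2).exists
  exact Function.invFun_eq
    (mem_range_of_exists_le_of_exists_ge Phi_continuous ⟨x₀, hx₀.le⟩ ⟨x₁, hx₁.le⟩)

theorem le_PhiInv_iff {u : ℝ} (hu : u ∈ Ioo 0 1) {x : ℝ} : x ≤ PhiInv u ↔ Phi x ≤ u := by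
  rw [← Phi_strictMono.le_iff_le, Phi_PhiInv hu]

theorem PhiInv_le_iff {u : ℝ} (hu : u ∈ Ioo 0 1) {x : ℝ} : PhiInv u ≤ x ↔ u ≤ Phi x := by
  rw [← Phi_strictMono.le_iff_le, Phi_PhiInv hu]

theorem one_sub_Phi_le_iff {α : ℝ} (hα : α ∈ Ioo 0 1) {x : ℝ} :
    1 - Phi x ≤ α ↔ PhiInv (1 - α) ≤ x := by
  rw [PhiInv_le_iff ⟨sub_pos.2 hα.2, sub_lt_self 1 hα.1⟩, sub_le_comm]

theorem volume_Ioo_setOf_le_PhiInv (c : ℝ) :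
    volume.restrict (Ioo 0 1) {u | c ≤ PhiInv u} = ENNReal.ofReal (1 - Phi c) := by
  have hevent : {u | c ≤ PhiInv u} ∩ Ioo 0 1 = Ico (Phi c) 1 := by
    ext u
    constructor
    · rintro ⟨hcu, hu⟩
      exact ⟨(le_PhiInv_iff hu).1 hcu, hu.2⟩
    · rintro ⟨hcu, hu1⟩
      have hu : u ∈ Ioo 0 1 := ⟨(Phi_pos c).trans_le hcu, hu1⟩
      exact ⟨(le_PhiInv_iff hu).2 hcu, hu⟩
  rw [Measure.restrict_apply' measurableSet_Ioo, hevent, Real.volume_Ico]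

theorem le_add_mul_div_iff {K : Type*} [Field K] [LinearOrder K] [IsStrictOrderedRing K]
    {b c x p q : K} (hp : 0 < p) (hq : 0 < q) : b ≤ c + x * q / p ↔ (b - c) * p / q ≤ x := by
  rw [← sub_le_iff_le_add', le_div_iff₀ hp, div_le_iff₀ hq]

theorem stmt10 (a lam0 lam1 α : ℝ) (ha : 0 < a) (h0 : 0 < lam0) (h1 : 0 < lam1)
    (hα : α ∈ Set.Ioo (0 : ℝ) 1) :
    (∀ n : ℝ, 0 < n →
      (MeasureTheory.volume.restrict (Set.Ioo (0 : ℝ) 1))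
          {u : ℝ | 1 - Phi (a * Real.sqrt n + PhiInv u * lam1 / lam0) ≤ α}
        = ENNReal.ofReal (1 - Phi ((PhiInv (1 - α) - a * Real.sqrt n) * lam0 / lam1))) ∧
    Filter.Tendsto
      (fun n : ℝ =>
        (MeasureTheory.volume.restrict (Set.Ioo (0 : ℝ) 1))
          {u : ℝ | 1 - Phi (a * Real.sqrt n + PhiInv u * lam1 / lam0) ≤ α})
      Filter.atTop (nhds 1) := by
  have hpower : ∀ A : ℝ,
      volume.restrict (Ioo 0 1) {u : ℝ | 1 - Phi (A + PhiInv u * lam1 / lam0) ≤ α}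
        = ENNReal.ofReal (1 - Phi ((PhiInv (1 - α) - A) * lam0 / lam1)) := fun A => by
    simp_rw [one_sub_Phi_le_iff hα, le_add_mul_div_iff h0 h1]
    exact volume_Ioo_setOf_le_PhiInv _
  refine ⟨fun n _ => hpower _, ?_⟩
  simp_rw [hpower]
  have hdrift : Tendsto (fun n : ℝ => a * Real.sqrt n) atTop atTop :=
    Real.tendsto_sqrt_atTop.const_mul_atTop ha
  have hthreshold : Tendsto (fun n : ℝ => (PhiInv (1 - α) - a * Real.sqrt n) * lam0 / lam1)
      atTop atBot :=
    ((tendsto_atBot_add_const_left _ _ (tendsto_neg_atTop_atBot.comp hdrift)).atBot_mul_const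
      h0).atBot_div_const h1
  simpa using ENNReal.tendsto_ofReal ((Phi_tendsto_atBot.comp hthreshold).const_sub 1)
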